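/- Let μ be a nonzero σ-finite measure on ℝ^d of the form dμ = p dx for a nonnegative measurable density p, and let h : ℝ^d → ℝ be measurable and bounded below, with m = essinf_μ h (the essential infimum of h with respect to μ) finite. Assume there exists β₀ > 0 such that ∫ exp(−β₀ h) dμ < ∞, and that ∫ exp(−β h) dμ > 0 for all β ≥ β₀. For β ≥ β₀ let Q_β be the probability measure with dQ_β = exp(−β h) dμ / ∫ exp(−β h) dμ. Then for every δ > 0, Q_β({x : h(x) ≥ m + δ}) → 0 as β → ∞; i.e., the Boltzmann distributions Q_β concentrate around the essential minimizers of h in the zero-temperature limit. -/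

import Mathlib

open MeasureTheory Filter Set Real Topology
open scoped ENNReal

/-!
Compare `{h ≥ m + δ}` with the sublevel set `{h ≤ m + δ/2}`, which has positive measure because
`m` is the essential infimum, and finite measure by Markov's inequality for `exp (-β₀ h)`.
On the first set `exp (-β h) ≤ exp (-(β - β₀)(m + δ)) exp (-β₀ h)`, on the second
`exp (-β h) ≥ exp (-β (m + δ/2))`, so the Boltzmann mass of `{h ≥ m + δ}` is `O(exp (-β δ/2))`.
-/

namespace Boltzmann

lemma setOf_exp_neg_mul_le_eq {α : Type*} (h : α → ℝ) {β : ℝ} (hβ : 0 < β) (b : ℝ) :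
    {x | exp (-β * b) ≤ exp (-β * h x)} = {x | h x ≤ b} := by
  ext x
  simp only [mem_ofPred_eq, exp_le_exp, neg_mul, neg_le_neg_iff, mul_le_mul_iff_right₀ hβ]

variable {α : Type*} [MeasurableSpace α] {μ : Measure α} {h : α → ℝ}

lemma integrable_exp_neg_mul_of_le (hh : Measurable h) (hbdd : BddBelow (range h))
    {β₀ β : ℝ} (hint : Integrable (fun x => exp (-β₀ * h x)) μ) (hβ : β₀ ≤ β) :
    Integrable (fun x => exp (-β * h x)) μ := by
  obtain ⟨m₀, hm₀⟩ := hbdd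
  refine (hint.const_mul (exp (-(β - β₀) * m₀))).mono'
    (hh.const_mul (-β)).exp.aestronglyMeasurable (ae_of_all _ fun x => ?_)
  have hx : m₀ ≤ h x := hm₀ ⟨x, rfl⟩
  rw [norm_of_nonneg (exp_pos _).le, ← exp_add]
  exact exp_le_exp.2 (by nlinarith)

lemma measure_le_lt_top_of_integrable_exp_neg_mul {β : ℝ} (hβ : 0 < β)
    (hint : Integrable (fun x => exp (-β * h x)) μ) (b : ℝ) :
    μ {x | h x ≤ b} < ∞ := by
  rw [← setOf_exp_neg_mul_le_eq h hβ b]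
  exact hint.measure_ge_lt_top (exp_pos _)

lemma exp_neg_mul_mul_measureReal_le_integral {β : ℝ} (hβ : 0 < β)
    (hint : Integrable (fun x => exp (-β * h x)) μ) (b : ℝ) :
    exp (-β * b) * μ.real {x | h x ≤ b} ≤ ∫ x, exp (-β * h x) ∂μ := by
  rw [← setOf_exp_neg_mul_le_eq h hβ b]
  exact mul_meas_ge_le_integral_of_nonneg (ae_of_all _ fun _ => (exp_pos _).le) hint _

lemma setIntegral_superlevel_exp_neg_mul_le (hh : Measurable h) {β₀ β : ℝ}
    (hint : Integrable (fun x => exp (-β₀ * h x)) μ) (hβ : β₀ ≤ β) (a : ℝ) :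
    ∫ x in {x | a ≤ h x}, exp (-β * h x) ∂μ ≤
      exp (-(β - β₀) * a) * ∫ x, exp (-β₀ * h x) ∂μ := by
  have hs : MeasurableSet {x | a ≤ h x} := measurableSet_le measurable_const hh
  have hbound : ∀ x ∈ {x | a ≤ h x}, exp (-β * h x) ≤ exp (-(β - β₀) * a) * exp (-β₀ * h x) := by
    intro x hx
    rw [← exp_add]
    exact exp_le_exp.2 (by nlinarith [show a ≤ h x from hx])
  have hint_s : IntegrableOn (fun x => exp (-β * h x)) {x | a ≤ h x} μ :=
    (hint.const_mul _).integrableOn.mono' (hh.const_mul (-β)).exp.aestronglyMeasurable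
      ((ae_restrict_iff' hs).2 (ae_of_all _ fun x hx => by
        rw [norm_of_nonneg (exp_pos _).le]; exact hbound x hx))
  calc ∫ x in {x | a ≤ h x}, exp (-β * h x) ∂μ
      ≤ ∫ x in {x | a ≤ h x}, exp (-(β - β₀) * a) * exp (-β₀ * h x) ∂μ :=
        setIntegral_mono_on hint_s (hint.const_mul _).integrableOn hs hbound
    _ = exp (-(β - β₀) * a) * ∫ x in {x | a ≤ h x}, exp (-β₀ * h x) ∂μ :=
        integral_const_mul _ _
    _ ≤ exp (-(β - β₀) * a) * ∫ x, exp (-β₀ * h x) ∂μ :=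
        mul_le_mul_of_nonneg_left
          (setIntegral_le_integral hint (ae_of_all _ fun _ => (exp_pos _).le)) (exp_pos _).le

theorem tendsto_setIntegral_superlevel_div_partition_zero (hh : Measurable h)
    (hbdd : BddBelow (range h)) {β₀ : ℝ} (hβ₀ : 0 < β₀)
    (hint : Integrable (fun x => exp (-β₀ * h x)) μ) {a b : ℝ} (hba : b < a)
    (hb : μ {x | h x ≤ b} ≠ 0) :
    Tendsto (fun β => (∫ x in {x | a ≤ h x}, exp (-β * h x) ∂μ) / ∫ x, exp (-β * h x) ∂μ)
      atTop (𝓝 0) := by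
  set Z₀ := ∫ x, exp (-β₀ * h x) ∂μ
  set c := μ.real {x | h x ≤ b}
  have hc : 0 < c :=
    ENNReal.toReal_pos hb (measure_le_lt_top_of_integrable_exp_neg_mul hβ₀ hint b).ne
  have hdecay : Tendsto (fun β => exp (β₀ * a) * Z₀ / c * exp (-((a - b) * β))) atTop (𝓝 0) := by
    simpa using (tendsto_exp_neg_atTop_nhds_zero.comp
      (tendsto_id.const_mul_atTop (sub_pos.2 hba))).const_mul (exp (β₀ * a) * Z₀ / c)
  refine tendsto_of_tendsto_of_tendsto_of_le_of_le' tendsto_const_nhds hdecay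
    (Eventually.of_forall fun β => div_nonneg
      (setIntegral_nonneg (measurableSet_le measurable_const hh) fun _ _ => (exp_pos _).le)
      (integral_nonneg fun _ => (exp_pos _).le)) ?_
  filter_upwards [eventually_ge_atTop β₀] with β hβ
  have hden := exp_neg_mul_mul_measureReal_le_integral (hβ₀.trans_le hβ)
    (integrable_exp_neg_mul_of_le hh hbdd hint hβ) b
  calc (∫ x in {x | a ≤ h x}, exp (-β * h x) ∂μ) / ∫ x, exp (-β * h x) ∂μ
      ≤ exp (-(β - β₀) * a) * Z₀ / (exp (-β * b) * c) :=
        div_le_div₀ (mul_nonneg (exp_pos _).le (integral_nonneg fun _ => (exp_pos _).le))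
          (setIntegral_superlevel_exp_neg_mul_le hh hint hβ a) (by positivity) hden
    _ = exp (β₀ * a) * Z₀ / c * exp (-((a - b) * β)) := by
        rw [show exp (-(β - β₀) * a) = exp (β₀ * a) * exp (-((a - b) * β)) * exp (-β * b) by
          rw [← exp_add, ← exp_add]; ring_nf]
        field_simp

end Boltzmann

theorem boltzmann_concentration_general
    (d : ℕ)
    (μ : Measure (EuclideanSpace ℝ (Fin d)))
    (h : EuclideanSpace ℝ (Fin d) → ℝ)
    (hh_meas : Measurable h) (hh_bdd : BddBelow (Set.range h))
    -- `m` is the essential infimum of `h` w.r.t. `μ`: the largest real number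
    -- such that `μ {x | h x < m} = 0`
    (m : ℝ)
    (hm_max : ∀ m' : ℝ, m < m' → μ {x | h x < m'} ≠ 0)
    (β₀ : ℝ) (hβ₀ : 0 < β₀)
    (h_int : Integrable (fun x => Real.exp (-β₀ * h x)) μ) :
    ∀ δ : ℝ, 0 < δ →
      Tendsto
        (fun β : ℝ =>
          (∫ x in {x | m + δ ≤ h x}, Real.exp (-β * h x) ∂μ) /
            (∫ x, Real.exp (-β * h x) ∂μ))
        atTop (nhds 0) := by
  intro δ hδ
  have hsublevel : μ {x | h x ≤ m + δ / 2} ≠ 0 := fun h0 =>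
    hm_max (m + δ / 2) (by linarith)
      (measure_mono_null (ofPred_subset_ofPred.2 fun _ => le_of_lt) h0)
  exact Boltzmann.tendsto_setIntegral_superlevel_div_partition_zero hh_meas hh_bdd hβ₀ h_int
    (by linarith) hsublevel

/-- **Concentration of Boltzmann distributions in the zero-temperature limit.**
If `μ = p dx` is a nonzero σ-finite measure, `h` is measurable and bounded below with
essential infimum `m` w.r.t. `μ` (i.e. `m` is the largest real with `μ {h < m} = 0`),
and `∫ exp(-β₀ h) dμ < ∞` for some `β₀ > 0` with all partition functions positive for
`β ≥ β₀`, then for every `δ > 0` the Boltzmann measure `Q_β` (with density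
`exp(-β h)/Z_β` w.r.t. `μ`) of the set `{h ≥ m + δ}` tends to `0` as `β → ∞`. -/
theorem boltzmann_concentration
    (d : ℕ) (hd : 1 ≤ d)
    (p : EuclideanSpace ℝ (Fin d) → ℝ)
    (hp_meas : Measurable p) (hp_nonneg : ∀ x, 0 ≤ p x)
    (μ : Measure (EuclideanSpace ℝ (Fin d)))
    (hμ : μ = volume.withDensity fun x => ENNReal.ofReal (p x))
    (hμ_ne : μ ≠ 0) (hμ_sf : SigmaFinite μ)
    (h : EuclideanSpace ℝ (Fin d) → ℝ)
    (hh_meas : Measurable h) (hh_bdd : BddBelow (Set.range h))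
    -- `m` is the essential infimum of `h` w.r.t. `μ`: the largest real number
    -- such that `μ {x | h x < m} = 0`
    (m : ℝ)
    (hm_null : μ {x | h x < m} = 0)
    (hm_max : ∀ m' : ℝ, m < m' → μ {x | h x < m'} ≠ 0)
    (β₀ : ℝ) (hβ₀ : 0 < β₀)
    (h_int : Integrable (fun x => Real.exp (-β₀ * h x)) μ)
    (h_pos : ∀ β : ℝ, β₀ ≤ β → 0 < ∫ x, Real.exp (-β * h x) ∂μ) :
    ∀ δ : ℝ, 0 < δ →
      Tendsto
        (fun β : ℝ =>
          (∫ x in {x | m + δ ≤ h x}, Real.exp (-β * h x) ∂μ) /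
            (∫ x, Real.exp (-β * h x) ∂μ))
        atTop (nhds 0) :=
  boltzmann_concentration_general d μ h hh_meas hh_bdd m hm_max β₀ hβ₀ h_int
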